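/- Let A and B be random variables taking values in finite sets on a common probability space, and suppose B takes at most 2^λ possible values (λ ≥ 0 a real number). Then H̃∞(A | B) ≥ H∞(A, B) − λ ≥ H∞(A) − λ, where H∞(A,B) is the min-entropy of the joint random variable (A,B). -/
import Mathlib

noncomputable section
open scoped Classical
open Finset

/-- Probability of an event under a probability mass function `p` on a finite sample space. -/
def prEvt {Ω : Type*} [Fintype Ω] (p : Ω → ℝ) (E : Set Ω) : ℝ :=
  ∑ ω, if ω ∈ E then p ω else 0

/-- Conditional probability of `E` given `F`. -/
def cprEvt {Ω : Type*} [Fintype Ω] (p : Ω → ℝ) (E F : Set Ω) : ℝ :=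
  prEvt p (E ∩ F) / prEvt p F

/-- Min-entropy `H∞(X) = -log₂ max_x Pr[X=x]`. -/
def minEnt {Ω α : Type*} [Fintype Ω] [Fintype α] [Nonempty α]
    (p : Ω → ℝ) (X : Ω → α) : ℝ :=
  - Real.logb 2 (⨆ x : α, prEvt p {ω | X ω = x})

/-- Average min-entropy `H̃∞(X|Y) = -log₂ (E_{y∼Y}[max_x Pr[X=x|Y=y]])`. -/
def avgMinEnt {Ω α β : Type*} [Fintype Ω] [Fintype α] [Nonempty α] [Fintype β]
    (p : Ω → ℝ) (X : Ω → α) (Y : Ω → β) : ℝ :=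
  - Real.logb 2 (∑ y : β, prEvt p {ω | Y ω = y} * ⨆ x : α, cprEvt p {ω | X ω = x} {ω | Y ω = y})

lemma prEvt_nonneg' {Ω : Type*} [Fintype Ω] {p : Ω → ℝ} (hp : ∀ ω, 0 ≤ p ω) (E : Set Ω) :
    0 ≤ prEvt p E := by
  apply Finset.sum_nonneg; intro ω _; split <;> simp [hp ω]

lemma prEvt_mono' {Ω : Type*} [Fintype Ω] {p : Ω → ℝ} (hp : ∀ ω, 0 ≤ p ω) {E F : Set Ω}
    (h : E ⊆ F) : prEvt p E ≤ prEvt p F := by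
  apply Finset.sum_le_sum; intro ω _
  by_cases hE : ω ∈ E
  · simp [hE, h hE]
  · simp only [hE, if_false]; split <;> simp [hp ω]

lemma sum_prEvt_fiber {Ω α : Type*} [Fintype Ω] [Fintype α] (p : Ω → ℝ) (X : Ω → α) :
    ∑ x : α, prEvt p {ω | X ω = x} = ∑ ω, p ω := by
  unfold prEvt
  rw [Finset.sum_comm]
  congr 1; ext ω
  rw [Finset.sum_eq_single (X ω)]
  · simp
  · intro b _ hb; simp [Set.mem_setOf_eq, Ne.symm hb]
  · simp

/-- If `B` takes at most `2^λ` possible values, then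
`H̃∞(A|B) ≥ H∞(A,B) - λ ≥ H∞(A) - λ`  (Lemma 2.2 of Dodis et al.). -/
theorem stmt4 {Ω α β : Type*} [Fintype Ω] [Fintype α] [Nonempty α] [Fintype β] [Nonempty β]
    (p : Ω → ℝ) (hp : ∀ ω, 0 ≤ p ω) (hsum : ∑ ω, p ω = 1)
    (A : Ω → α) (B : Ω → β) (lam : ℝ) (hlam : 0 ≤ lam)
    (hB : ((Finset.univ.filter fun b : β => prEvt p {ω | B ω = b} ≠ 0).card : ℝ) ≤ (2 : ℝ) ^ lam) :
    minEnt p (fun ω => (A ω, B ω)) - lam ≤ avgMinEnt p A B ∧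
    minEnt p A - lam ≤ minEnt p (fun ω => (A ω, B ω)) - lam := by
  set M : ℝ := ⨆ xb : α × β, prEvt p {ω | (A ω, B ω) = xb} with hM
  set MA : ℝ := ⨆ x : α, prEvt p {ω | A ω = x} with hMA
  set S : ℝ := ∑ y : β, prEvt p {ω | B ω = y} * ⨆ x : α, cprEvt p {ω | A ω = x} {ω | B ω = y}
    with hS
  have hbddJ : BddAbove (Set.range fun xb : α × β => prEvt p {ω | (A ω, B ω) = xb}) :=
    (Set.finite_range _).bddAbove
  have hbddA : BddAbove (Set.range fun x : α => prEvt p {ω | A ω = x}) :=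
    (Set.finite_range _).bddAbove
  have hbddC : ∀ y : β, BddAbove (Set.range fun x : α => cprEvt p {ω | A ω = x} {ω | B ω = y}) :=
    fun _ => (Set.finite_range _).bddAbove
  -- M is positive
  have hsumJ : ∑ xb : α × β, prEvt p {ω | (A ω, B ω) = xb} = 1 := by
    rw [sum_prEvt_fiber p (fun ω => (A ω, B ω)), hsum]
  have hMpos : 0 < M := by
    by_contra h
    push_neg at h
    have : ∑ xb : α × β, prEvt p {ω | (A ω, B ω) = xb} ≤ 0 :=
      Finset.sum_nonpos fun xb _ => le_trans (le_ciSup hbddJ xb) h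
    linarith
  -- M ≤ MA
  have hMle : M ≤ MA := by
    apply ciSup_le
    intro xb
    refine le_trans ?_ (le_ciSup hbddA xb.1)
    apply prEvt_mono' hp
    intro ω hω
    simp only [Set.mem_setOf_eq] at *
    rw [Prod.ext_iff] at hω; exact hω.1
  -- each joint fiber prob equals intersection prob
  have hfib : ∀ (x : α) (y : β),
      prEvt p ({ω | A ω = x} ∩ {ω | B ω = y}) = prEvt p {ω | (A ω, B ω) = (x, y)} := by
    intro x y; unfold prEvt; congr 1; ext ω
    congr 1
    simp [Set.mem_setOf_eq, Prod.ext_iff, Set.mem_inter_iff]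
  -- S ≤ 2^lam * M
  have hSle : S ≤ (2 : ℝ) ^ lam * M := by
    have key : ∀ y ∈ Finset.univ.filter (fun b : β => prEvt p {ω | B ω = b} ≠ 0),
        prEvt p {ω | B ω = y} * ⨆ x : α, cprEvt p {ω | A ω = x} {ω | B ω = y} ≤ M := by
      intro y hy
      simp only [Finset.mem_filter] at hy
      have hpy : 0 < prEvt p {ω | B ω = y} :=
        lt_of_le_of_ne (prEvt_nonneg' hp _) (Ne.symm hy.2)
      have hsup : (⨆ x : α, cprEvt p {ω | A ω = x} {ω | B ω = y})
          ≤ M / prEvt p {ω | B ω = y} := by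
        apply ciSup_le
        intro x
        rw [cprEvt, div_le_div_iff_of_pos_right hpy, hfib]
        exact le_ciSup hbddJ (x, y)
      calc prEvt p {ω | B ω = y} * ⨆ x : α, cprEvt p {ω | A ω = x} {ω | B ω = y}
          ≤ prEvt p {ω | B ω = y} * (M / prEvt p {ω | B ω = y}) :=
            mul_le_mul_of_nonneg_left hsup hpy.le
        _ = M := by field_simp
    have h1 : S ≤ ((Finset.univ.filter fun b : β => prEvt p {ω | B ω = b} ≠ 0).card : ℝ) * M := by
      rw [hS, ← Finset.sum_filter_add_sum_filter_not Finset.univ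
        (fun b : β => prEvt p {ω | B ω = b} ≠ 0)]
      have h2 : ∑ y ∈ Finset.univ.filter (fun b : β => ¬ prEvt p {ω | B ω = b} ≠ 0),
          prEvt p {ω | B ω = y} * ⨆ x : α, cprEvt p {ω | A ω = x} {ω | B ω = y} = 0 := by
        apply Finset.sum_eq_zero
        intro y hy
        simp only [Finset.mem_filter, not_not] at hy
        rw [hy.2, zero_mul]
      rw [h2, add_zero]
      have := Finset.sum_le_card_nsmul _ _ M key
      rwa [nsmul_eq_mul] at this
    exact le_trans h1 (mul_le_mul_of_nonneg_right hB hMpos.le)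
  -- S > 0
  have hSpos : 0 < S := by
    have hsumB : ∑ y : β, prEvt p {ω | B ω = y} = 1 := by
      rw [sum_prEvt_fiber p B, hsum]
    obtain ⟨y, -, hy⟩ : ∃ y ∈ Finset.univ, 0 < prEvt p {ω | B ω = y} := by
      by_contra h
      push_neg at h
      have : ∑ y : β, prEvt p {ω | B ω = y} ≤ 0 :=
        Finset.sum_nonpos fun y _ => h y (Finset.mem_univ y)
      linarith
    have hsumAy : ∑ x : α, prEvt p ({ω | A ω = x} ∩ {ω | B ω = y})
        = prEvt p {ω | B ω = y} := by
      unfold prEvt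
      rw [Finset.sum_comm]
      congr 1; ext ω
      by_cases hω : B ω = y
      · rw [Finset.sum_eq_single (A ω)]
        · simp [Set.mem_setOf_eq, hω]
        · intro b _ hb; simp [Set.mem_setOf_eq, Ne.symm hb]
        · simp
      · simp [Set.mem_setOf_eq, hω]
    obtain ⟨x, -, hx⟩ : ∃ x ∈ Finset.univ, 0 < prEvt p ({ω | A ω = x} ∩ {ω | B ω = y}) := by
      by_contra h
      push_neg at h
      have : ∑ x : α, prEvt p ({ω | A ω = x} ∩ {ω | B ω = y}) ≤ 0 :=
        Finset.sum_nonpos fun x _ => h x (Finset.mem_univ x)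
      linarith
    apply Finset.sum_pos'
    · intro z _
      apply mul_nonneg (prEvt_nonneg' hp _)
      refine le_trans ?_ (le_ciSup (hbddC z) (Classical.arbitrary α))
      exact div_nonneg (prEvt_nonneg' hp _) (prEvt_nonneg' hp _)
    · refine ⟨y, Finset.mem_univ y, ?_⟩
      apply mul_pos hy
      refine lt_of_lt_of_le ?_ (le_ciSup (hbddC y) x)
      exact div_pos hx hy
  constructor
  · -- minEnt joint - lam ≤ avgMinEnt
    show -Real.logb 2 M - lam ≤ -Real.logb 2 S
    have hlog : Real.logb 2 S ≤ Real.logb 2 ((2:ℝ) ^ lam * M) :=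
      Real.logb_le_logb_of_le one_lt_two hSpos hSle
    have heq : Real.logb 2 ((2:ℝ) ^ lam * M) = lam + Real.logb 2 M := by
      rw [Real.logb_mul (by positivity) hMpos.ne',
        Real.logb_rpow (by norm_num) (by norm_num)]
    linarith
  · -- minEnt A ≤ minEnt joint
    show -Real.logb 2 MA - lam ≤ -Real.logb 2 M - lam
    have : Real.logb 2 M ≤ Real.logb 2 MA :=
      Real.logb_le_logb_of_le one_lt_two hMpos hMle
    linarith
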